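/- Let f : ℕ → ℕ and define g(n) = f(n) + f(n-1) for n ≥ 1 (with g(0) = f(0)). If g is of quasi-polynomial type with period 2, then f is also of quasi-polynomial type with period 2, and moreover deg f = deg g. -/

import Mathlib

/-!
With `g(2m+1) = f(2m+1) + f(2m)` and `g(2m+2) = f(2m+2) + f(2m+1)`, the even part of `f` has
polynomial differences `f(2m+2) - f(2m) = Q₀(m+1) - Q₁(m)`, so it is eventually a discrete
antiderivative of that polynomial plus a constant, and the odd part is `Q₁ - P₀`.
Conversely `Q₁ = P₀ + P₁` and `Q₀(X+1) = P₀(X+1) + P₁`. As `f ≥ 0`, the leading coefficients of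
`P₀` and `P₁` are nonnegative, so nothing cancels in `P₀ + P₁`: `deg Q₁ = max (deg P₀, deg P₁)`,
which bounds `deg Q₀`.
-/

open Filter Polynomial

/-- `f` is of quasi-polynomial type with period 2, witnessed by polynomials `P₀, P₁`. -/
def QP2Witness (f : ℕ → ℤ) (P₀ P₁ : Polynomial ℚ) : Prop :=
  ∀ᶠ m : ℕ in atTop, (f (2 * m) : ℚ) = P₀.eval (m : ℚ) ∧ (f (2 * m + 1) : ℚ) = P₁.eval (m : ℚ)

namespace Polynomial

theorem exists_eval_add_one_sub_eval_eq (R : ℚ[X]) :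
    ∃ S : ℚ[X], ∀ x : ℚ, S.eval (x + 1) - S.eval x = R.eval x := by
  -- `B_{k+1}(x + 1) - B_{k+1}(x) = (k + 1) x^k` for the Bernoulli polynomials
  refine ⟨∑ k ∈ Finset.range (R.natDegree + 1), C (R.coeff k / (k + 1)) * bernoulli (k + 1),
    fun x => ?_⟩
  simp only [eval_finsetSum, eval_mul, eval_C]
  rw [← Finset.sum_sub_distrib, eval_eq_sum_range x]
  refine Finset.sum_congr rfl fun k _ => ?_
  rw [← mul_sub, add_comm x 1, bernoulli_eval_one_add, add_sub_cancel_left]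
  push_cast
  field_simp

theorem eq_of_eventually_eval_natCast_eq {R : Type*} [CommRing R] [IsDomain R] [CharZero R]
    {p q : R[X]} (h : ∀ᶠ n : ℕ in atTop, p.eval (n : R) = q.eval (n : R)) : p = q := by
  refine eq_of_infinite_eval_eq p q (Set.Infinite.mono ?_ <|
    (Nat.frequently_atTop_iff_infinite.mp h.frequently).image Nat.cast_injective.injOn)
  rintro _ ⟨n, hn, rfl⟩
  exact hn

theorem leadingCoeff_nonneg_of_eventually_eval_natCast_nonneg {𝕜 : Type*} [NormedField 𝕜]
    [LinearOrder 𝕜] [IsStrictOrderedRing 𝕜] [OrderTopology 𝕜] [Archimedean 𝕜] {P : 𝕜[X]}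
    (h : ∀ᶠ n : ℕ in atTop, 0 ≤ P.eval (n : 𝕜)) : 0 ≤ P.leadingCoeff := by
  by_contra! hneg
  rcases le_or_gt P.degree 0 with hdeg | hdeg
  · rw [eq_C_of_degree_le_zero hdeg, leadingCoeff_C] at hneg
    obtain ⟨n, hn⟩ := h.exists
    rw [eq_C_of_degree_le_zero hdeg, eval_C] at hn
    exact hn.not_gt hneg
  · have hbot := (P.tendsto_atBot_of_leadingCoeff_nonpos hdeg hneg.le).comp
      tendsto_natCast_atTop_atTop
    obtain ⟨n, hn, hn'⟩ := (h.and (hbot.eventually (eventually_lt_atBot 0))).exists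
    exact hn'.not_ge hn

theorem degree_add_eq_max_of_leadingCoeff_nonneg {R : Type*} [Semiring R] [LinearOrder R]
    [IsStrictOrderedRing R] {p q : R[X]} (hp : 0 ≤ p.leadingCoeff) (hq : 0 ≤ q.leadingCoeff) :
    (p + q).degree = max p.degree q.degree := by
  rcases eq_or_ne p 0 with rfl | hp0
  · simp
  refine degree_add_eq_of_leadingCoeff_add_ne_zero (add_pos_of_pos_of_nonneg ?_ hq).ne'
  exact hp.lt_of_ne (leadingCoeff_ne_zero.mpr hp0).symm

end Polynomial

theorem exists_eventually_eq_add_const_of_eventually_sub_eq {G : Type*} [AddCommGroup G]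
    {u v : ℕ → G} (h : ∀ᶠ m in atTop, u (m + 1) - u m = v (m + 1) - v m) :
    ∃ c, ∀ᶠ m in atTop, u m = v m + c := by
  obtain ⟨N, hN⟩ := eventually_atTop.mp h
  refine ⟨u N - v N, eventually_atTop.mpr ⟨N, fun m hm => ?_⟩⟩
  induction m, hm using Nat.le_induction with
  | base => abel
  | succ m hm ih => rw [← sub_add_cancel (u (m + 1)) (u m), hN m hm, ih]; abel

namespace QP2Witness

variable {f g : ℕ → ℤ} {P₀ P₁ Q₀ Q₁ : ℚ[X]}

theorem leadingCoeff_nonneg (hf : ∀ n, 0 ≤ f n) (h : QP2Witness f P₀ P₁) :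
    0 ≤ P₀.leadingCoeff ∧ 0 ≤ P₁.leadingCoeff := by
  refine ⟨leadingCoeff_nonneg_of_eventually_eval_natCast_nonneg ?_,
    leadingCoeff_nonneg_of_eventually_eval_natCast_nonneg ?_⟩ <;>
  filter_upwards [h] with m hm
  · exact hm.1 ▸ mod_cast hf _
  · exact hm.2 ▸ mod_cast hf _

theorem exists_of_sum_consecutive (hfg : ∀ n, (g (n + 1) : ℚ) = f (n + 1) + f n)
    (hg : QP2Witness g Q₀ Q₁) : ∃ P₀ P₁, QP2Witness f P₀ P₁ := by
  obtain ⟨S, hS⟩ := exists_eval_add_one_sub_eval_eq (taylor 1 Q₀ - Q₁)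
  have hdiff : ∀ᶠ m : ℕ in atTop, (f (2 * (m + 1)) : ℚ) - f (2 * m) =
      S.eval ((m + 1 : ℕ) : ℚ) - S.eval (m : ℚ) := by
    filter_upwards [hg, (tendsto_add_atTop_nat 1).eventually hg] with m hm hm'
    have hSm := hS m
    rw [eval_sub, taylor_eval] at hSm
    rw [show 2 * (m + 1) = 2 * m + 1 + 1 by ring] at hm' ⊢
    push_cast at hm' ⊢
    linarith [hfg (2 * m), hfg (2 * m + 1), hm.2, hm'.1]
  obtain ⟨c, hc⟩ := exists_eventually_eq_add_const_of_eventually_sub_eq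
    (u := fun m => (f (2 * m) : ℚ)) (v := fun m => S.eval (m : ℚ)) hdiff
  refine ⟨S + C c, Q₁ - (S + C c), ?_⟩
  filter_upwards [hg, hc] with m hgm hcm
  refine ⟨by simpa using hcm, ?_⟩
  simp only [eval_sub, eval_add, eval_C]
  linarith [hfg (2 * m), hgm.2]

theorem eq_of_sum_consecutive (hfg : ∀ n, (g (n + 1) : ℚ) = f (n + 1) + f n)
    (hf : QP2Witness f P₀ P₁) (hg : QP2Witness g Q₀ Q₁) :
    Q₁ = P₀ + P₁ ∧ taylor 1 Q₀ = taylor 1 P₀ + P₁ := by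
  constructor <;> apply eq_of_eventually_eval_natCast_eq
  · filter_upwards [hf, hg] with m hfm hgm
    rw [eval_add, ← hfm.1, ← hfm.2, ← hgm.2, hfg, add_comm]
  · filter_upwards [hf, (tendsto_add_atTop_nat 1).eventually hf,
      (tendsto_add_atTop_nat 1).eventually hg] with m hfm hfm' hgm'
    rw [show 2 * (m + 1) = 2 * m + 1 + 1 by ring] at hfm' hgm'
    push_cast at hfm' hgm'
    rw [eval_add, taylor_eval, taylor_eval, ← hfm'.1, ← hgm'.1, ← hfm.2, hfg]

theorem max_degree_eq_of_sum_consecutive (hfg : ∀ n, (g (n + 1) : ℚ) = f (n + 1) + f n)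
    (hf0 : ∀ n, 0 ≤ f n) (hf : QP2Witness f P₀ P₁)
    (hg : QP2Witness g Q₀ Q₁) : max P₀.degree P₁.degree = max Q₀.degree Q₁.degree := by
  obtain ⟨hQ₁, hQ₀⟩ := eq_of_sum_consecutive hfg hf hg
  obtain ⟨hP₀, hP₁⟩ := hf.leadingCoeff_nonneg hf0
  have hdegQ₀ : Q₀.degree ≤ max P₀.degree P₁.degree := by
    rw [← degree_taylor Q₀ 1, hQ₀, ← degree_taylor P₀ 1]
    exact degree_add_le _ _
  rw [hQ₁, degree_add_eq_max_of_leadingCoeff_nonneg hP₀ hP₁, max_eq_right hdegQ₀]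

end QP2Witness

theorem qp2_of_sum_consecutive_general (f g : ℕ → ℕ)
    (hgs : ∀ n : ℕ, g (n + 1) = f (n + 1) + f n)
    (hQP : ∃ Q₀ Q₁ : Polynomial ℚ, QP2Witness (fun n => (g n : ℤ)) Q₀ Q₁) :
    (∃ P₀ P₁ : Polynomial ℚ, QP2Witness (fun n => (f n : ℤ)) P₀ P₁) ∧
    (∀ P₀ P₁ Q₀ Q₁ : Polynomial ℚ,
      QP2Witness (fun n => (f n : ℤ)) P₀ P₁ → QP2Witness (fun n => (g n : ℤ)) Q₀ Q₁ →
      max P₀.degree P₁.degree = max Q₀.degree Q₁.degree) := by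
  have hfg : ∀ n, ((g (n + 1) : ℤ) : ℚ) = (f (n + 1) : ℤ) + (f n : ℤ) := fun n => by
    exact_mod_cast hgs n
  refine ⟨?_, fun P₀ P₁ Q₀ Q₁ hP hQ =>
    QP2Witness.max_degree_eq_of_sum_consecutive hfg (fun n => Int.natCast_nonneg _) hP hQ⟩
  obtain ⟨Q₀, Q₁, hQ⟩ := hQP
  exact QP2Witness.exists_of_sum_consecutive hfg hQ

/-- If `g(n) = f(n) + f(n-1)` (with `g 0 = f 0`) is of quasi-polynomial type with period 2,
then so is `f`, and moreover `deg f = deg g` (degrees of the witnessing polynomials, with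
the zero polynomial having degree `⊥ = -∞`). -/
theorem qp2_of_sum_consecutive (f g : ℕ → ℕ)
    (hg0 : g 0 = f 0) (hgs : ∀ n : ℕ, g (n + 1) = f (n + 1) + f n)
    (hQP : ∃ Q₀ Q₁ : Polynomial ℚ, QP2Witness (fun n => (g n : ℤ)) Q₀ Q₁) :
    (∃ P₀ P₁ : Polynomial ℚ, QP2Witness (fun n => (f n : ℤ)) P₀ P₁) ∧
    (∀ P₀ P₁ Q₀ Q₁ : Polynomial ℚ,
      QP2Witness (fun n => (f n : ℤ)) P₀ P₁ → QP2Witness (fun n => (g n : ℤ)) Q₀ Q₁ →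
      max P₀.degree P₁.degree = max Q₀.degree Q₁.degree) :=
  qp2_of_sum_consecutive_general f g hgs hQP
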